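/- For words u, v over {A,B,•}, trim(u) = trim(v) (as words over {A,B}) if and only if ρ̂(u) + ρ̄̂(v) = 1, where ρ̂(w) = ρ(trim(w)·Z') and ρ̄̂(w) = ρ̄(trim(w)·Z'). -/
import Mathlib


/-- The alphabet {A, B, Z'} (with `Z` playing the role of Z'). -/
inductive Letter : Type
  | A | B | Z
  deriving DecidableEq

/-- The alphabet {A, B, •} (with `dot` playing the role of •). -/
inductive Sig : Type
  | A | B | dot
  deriving DecidableEq

/-- `trim` erases all occurrences of • (yielding a word over {A,B}). -/
def trim : List Sig → List Letter :=
  List.filterMap fun x =>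
    match x with
    | .A => some Letter.A
    | .B => some Letter.B
    | .dot => none

/-- The indicator ϑ with ϑ(Z')=1, ϑ(A)=1, ϑ(B)=0. -/
noncomputable def theta : Letter → ℝ
  | .A => 1 | .B => 0 | .Z => 1

/-- The indicator ϑ̄ with ϑ̄(Z')=1, ϑ̄(A)=0, ϑ̄(B)=1. -/
noncomputable def thetaBar : Letter → ℝ
  | .A => 0 | .B => 1 | .Z => 1

/-- ρ(x₁⋯xₙ) = Σᵢ ϑ(xᵢ)/2ⁱ. -/
noncomputable def rho (w : List Letter) : ℝ :=
  ∑ i : Fin w.length, theta (w.get i) / 2 ^ ((i : ℕ) + 1)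

/-- ρ̄(x₁⋯xₙ) = Σᵢ ϑ̄(xᵢ)/2ⁱ. -/
noncomputable def rhoBar (w : List Letter) : ℝ :=
  ∑ i : Fin w.length, thetaBar (w.get i) / 2 ^ ((i : ℕ) + 1)

/-- ρ̂(w) := ρ(trim(w)·Z'). -/
noncomputable def rhoHat (w : List Sig) : ℝ := rho (trim w ++ [Letter.Z])

/-- ρ̄̂(w) := ρ̄(trim(w)·Z'). -/
noncomputable def rhoBarHat (w : List Sig) : ℝ := rhoBar (trim w ++ [Letter.Z])


lemma rho_nil : rho [] = 0 := by simp [rho]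

lemma rhoBar_nil : rhoBar [] = 0 := by simp [rhoBar]

lemma rho_cons (a : Letter) (w : List Letter) :
    rho (a :: w) = theta a / 2 + rho w / 2 := by
  simp [rho, Fin.sum_univ_succ, Finset.sum_div, pow_succ]
  ring_nf
  congr 1
  funext x
  ring

lemma rhoBar_cons (a : Letter) (w : List Letter) :
    rhoBar (a :: w) = thetaBar a / 2 + rhoBar w / 2 := by
  simp [rhoBar, Fin.sum_univ_succ, Finset.sum_div, pow_succ]
  ring_nf
  congr 1
  funext x
  ring

lemma rhoZ_pos (w : List Letter) : 0 < rho (w ++ [Letter.Z]) := by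
  induction w with
  | nil => simp [rho_cons, rho_nil, theta]
  | cons a w ih =>
    rw [List.cons_append, rho_cons]
    have : (0:ℝ) ≤ theta a := by cases a <;> simp [theta]
    nlinarith

lemma rhoZ_lt_one (w : List Letter) : rho (w ++ [Letter.Z]) < 1 := by
  induction w with
  | nil => norm_num [rho_cons, rho_nil, theta]
  | cons a w ih =>
    rw [List.cons_append, rho_cons]
    have : theta a ≤ 1 := by cases a <;> simp [theta]
    nlinarith

lemma key (w : List Letter) (hw : ∀ x ∈ w, x ≠ Letter.Z) :
    rho (w ++ [Letter.Z]) + rhoBar (w ++ [Letter.Z]) = 1 := by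
  induction w with
  | nil => norm_num [rho_cons, rhoBar_cons, rho_nil, rhoBar_nil, theta, thetaBar]
  | cons a w ih =>
    rw [List.cons_append, rho_cons, rhoBar_cons]
    have ha : theta a + thetaBar a = 1 := by
      have := hw a (by simp)
      cases a <;> simp_all [theta, thetaBar]
    have := ih fun x hx => hw x (by simp [hx])
    linarith

lemma rhoZ_inj (s : List Letter) : ∀ t : List Letter,
    (∀ x ∈ s, x ≠ Letter.Z) → (∀ x ∈ t, x ≠ Letter.Z) →
    rho (s ++ [Letter.Z]) = rho (t ++ [Letter.Z]) → s = t := by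
  induction s with
  | nil =>
    intro t _ ht h
    cases t with
    | nil => rfl
    | cons b t =>
      exfalso
      rw [List.cons_append, rho_cons] at h
      have h0 := rhoZ_pos t
      have h1 := rhoZ_lt_one t
      simp [rho_cons, rho_nil, theta] at h
      have hb := ht b (by simp)
      cases b <;> simp [theta] at h <;> [linarith; linarith; exact hb rfl]
  | cons a s ih =>
    intro t hs ht h
    cases t with
    | nil =>
      exfalso
      rw [List.cons_append, rho_cons] at h
      have h0 := rhoZ_pos s
      have h1 := rhoZ_lt_one s
      simp [rho_cons, rho_nil, theta] at h
      have hb := hs a (by simp)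
      cases a <;> simp [theta] at h <;> [linarith; linarith; exact hb rfl]
    | cons b t =>
      rw [List.cons_append, List.cons_append, rho_cons, rho_cons] at h
      have hs' : ∀ x ∈ s, x ≠ Letter.Z := fun x hx => hs x (by simp [hx])
      have ht' : ∀ x ∈ t, x ≠ Letter.Z := fun x hx => ht x (by simp [hx])
      have ha := hs a (by simp)
      have hb := ht b (by simp)
      have p0 := rhoZ_pos s
      have p1 := rhoZ_lt_one s
      have q0 := rhoZ_pos t
      have q1 := rhoZ_lt_one t
      have hrec : rho (s ++ [Letter.Z]) = rho (t ++ [Letter.Z]) → s = t :=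
        ih t hs' ht'
      cases a <;> cases b <;> simp [theta] at h ha hb ⊢ <;>
        first
          | exact hrec (by linarith)
          | linarith

lemma trim_ne_Z (w : List Sig) : ∀ x ∈ trim w, x ≠ Letter.Z := by
  intro x hx
  simp only [trim, List.mem_filterMap] at hx
  obtain ⟨a, -, h⟩ := hx
  cases a
  · simp at h; subst h; simp
  · simp at h; subst h; simp
  · simp at h

/-- For words u, v over {A,B,•}: trim(u) = trim(v) iff ρ̂(u) + ρ̄̂(v) = 1. -/
theorem trim_eq_iff_rhoHat_add_rhoBarHat_eq_one (u v : List Sig) :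
    trim u = trim v ↔ rhoHat u + rhoBarHat v = 1 := by
  constructor
  · intro h
    rw [rhoHat, rhoBarHat, h]
    exact key (trim v) (trim_ne_Z v)
  · intro h
    have hv := key (trim v) (trim_ne_Z v)
    have hbar : rhoBar (trim v ++ [Letter.Z]) = rhoBarHat v := rfl
    have : rho (trim u ++ [Letter.Z]) = rho (trim v ++ [Letter.Z]) := by
      have : rhoHat u = rho (trim u ++ [Letter.Z]) := rfl
      linarith [h]
    exact rhoZ_inj (trim u) (trim v) (trim_ne_Z u) (trim_ne_Z v) this
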